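/- arXiv:2203.08311 — 3 statements merged into one kernel-verified Lean document; each statement's English description precedes it below -/
import Mathlib

section
/- Let S_θ = [[1,0,0,0],[-1,1,0,0],[-1,0,0,1],[-1,1,-1,1]], Q_θ = [[1,0,0,0],[0,0,0,-2],[0,0,4,0],[0,-2,0,0]], and Q_D = [[1,-1,-1,-1],[-1,1,-1,-1],[-1,-1,1,-1],[-1,-1,-1,1]]. Then for every matrix W in the subgroup generated by S₁, S₂, S₃, S₄, the matrix W_θ = W·S_θ satisfies W_θ Q_θ W_θᵀ = Q_D. -/
open Matrix

/-- The Apollonian generators. -/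
def S₁ : Matrix (Fin 4) (Fin 4) ℤ := !![-1,2,2,2; 0,1,0,0; 0,0,1,0; 0,0,0,1]
def S₂ : Matrix (Fin 4) (Fin 4) ℤ := !![1,0,0,0; 2,-1,2,2; 0,0,1,0; 0,0,0,1]
def S₃ : Matrix (Fin 4) (Fin 4) ℤ := !![1,0,0,0; 0,1,0,0; 2,2,-1,2; 0,0,0,1]
def S₄ : Matrix (Fin 4) (Fin 4) ℤ := !![1,0,0,0; 0,1,0,0; 0,0,1,0; 2,2,2,-1]

/-- The Apollonian group: since each generator is an involution, the subgroup
generated by `S₁, S₂, S₃, S₄` consists of all finite products of the generators. -/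
def Ap : Submonoid (Matrix (Fin 4) (Fin 4) ℤ) := Submonoid.closure {S₁, S₂, S₃, S₄}

/-- The matrix `S_θ` implementing `θ`. -/
def Sθ : Matrix (Fin 4) (Fin 4) ℤ := !![1,0,0,0; -1,1,0,0; -1,0,0,1; -1,1,-1,1]

/-- The quadratic form `Q_θ`. -/
def Qθ : Matrix (Fin 4) (Fin 4) ℤ := !![1,0,0,0; 0,0,0,-2; 0,0,4,0; 0,-2,0,0]

/-- The Descartes quadratic form. -/
def QD : Matrix (Fin 4) (Fin 4) ℤ := !![1,-1,-1,-1; -1,1,-1,-1; -1,-1,1,-1; -1,-1,-1,1]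

lemma sθqθ : Sθ * Qθ * Sθᵀ = QD := by decide

lemma gen_pres : ∀ S ∈ ({S₁, S₂, S₃, S₄} : Set (Matrix (Fin 4) (Fin 4) ℤ)),
    S * QD * Sᵀ = QD := by
  rintro S (rfl | rfl | rfl | rfl) <;> decide

lemma ap_pres : ∀ W ∈ Ap, W * QD * Wᵀ = QD := by
  intro W hW
  induction hW using Submonoid.closure_induction with
  | mem x hx => exact gen_pres x hx
  | one => simp
  | mul a b _ _ ha hb =>
    calc (a * b) * QD * (a * b)ᵀ = a * (b * QD * bᵀ) * aᵀ := by
          simp [Matrix.transpose_mul, Matrix.mul_assoc]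
    _ = QD := by rw [hb, ha]

/-- For every `W` in the Apollonian group, `W_θ = W·S_θ` satisfies
`W_θ Q_θ W_θᵀ = Q_D`. -/
theorem ap_stheta_qtheta :
    ∀ W ∈ Ap, (W * Sθ) * Qθ * (W * Sθ)ᵀ = QD := by
  intro W hW
  calc (W * Sθ) * Qθ * (W * Sθ)ᵀ = W * (Sθ * Qθ * Sθᵀ) * Wᵀ := by
        simp [Matrix.transpose_mul, Matrix.mul_assoc]
  _ = QD := by rw [sθqθ]; exact ap_pres W hW
end

section
/- Let S_θ = [[1,0,0,0],[-1,1,0,0],[-1,0,0,1],[-1,1,-1,1]]. For every matrix W in the subgroup generated by S₁, S₂, S₃, S₄, every row (t,u,v,w) of the matrix W·S_θ satisfies t² + 4v² − 4uw = 1. -/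
open Matrix

/-- The matrix of the quadratic form `t² + 4v² − 4uw`. -/
def Aq : Matrix (Fin 4) (Fin 4) ℤ := !![1,0,0,0; 0,0,0,-2; 0,0,4,0; 0,-2,0,0]

/-- The Descartes form, invariant under the Apollonian group. -/
def Bq : Matrix (Fin 4) (Fin 4) ℤ := !![1,-1,-1,-1; -1,1,-1,-1; -1,-1,1,-1; -1,-1,-1,1]

lemma stheta_conj : Sθ * Aq * Sθᵀ = Bq := by
  decide

lemma ap_invariant : ∀ W ∈ Ap, W * Bq * Wᵀ = Bq := by
  intro W hW
  induction hW using Submonoid.closure_induction with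
  | one => simp
  | mem x hx =>
    rcases hx with h | h | h | h <;> subst h <;> decide
  | mul x y _ _ hx hy =>
    rw [transpose_mul, show x * y * Bq * (yᵀ * xᵀ) = x * (y * Bq * yᵀ) * xᵀ by
      noncomm_ring, hy, hx]

/-- Every row `(t,u,v,w)` of `W·S_θ`, for `W` in the Apollonian group, satisfies
`t² + 4v² − 4uw = 1`. -/
theorem ap_stheta_row_relation :
    ∀ W ∈ Ap, ∀ j : Fin 4,
      ((W * Sθ) j 0) ^ 2 + 4 * ((W * Sθ) j 2) ^ 2
        - 4 * ((W * Sθ) j 1) * ((W * Sθ) j 3) = 1 := by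
  intro W hW j
  have h : (W * Sθ) * Aq * (W * Sθ)ᵀ = Bq := by
    rw [transpose_mul, show W * Sθ * Aq * (Sθᵀ * Wᵀ) = W * (Sθ * Aq * Sθᵀ) * Wᵀ by
      noncomm_ring, stheta_conj, ap_invariant W hW]
  have hd : ((W * Sθ) * Aq * (W * Sθ)ᵀ) j j = 1 := by
    rw [h]; fin_cases j <;> rfl
  rw [← hd]
  simp [mul_apply, transpose_apply, Aq, Fin.sum_univ_four]
  ring
end

section
/- Define matrices W_k for k ≥ 1 recursively by W₁ = S₁, and W_{k+1} = S₄·W_k if k is odd, W_{k+1} = S₁·W_k if k is even. Then for every k ≥ 1: if k is odd, the first row of W_k·S_θ equals (−(2(k+1)²−1), (k+1)², −(k+1), (k+1)²); and if k is even, the fourth row of W_k·S_θ equals (−(2(k+1)²−1), (k+1)², −(k+1), (k+1)²). In particular the coefficient quadruple of W_k is (t_k,u_k,v_k,w_k) = (2(k+1)²−1, (k+1)², −(k+1), (k+1)²). -/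
open Matrix

/-- The words `W_k`: `W₁ = S₁`, and `W_{k+1} = S₄·W_k` for odd `k`,
`W_{k+1} = S₁·W_k` for even `k ≥ 2`. -/
def W : ℕ → Matrix (Fin 4) (Fin 4) ℤ
  | 0 => 1
  | (k + 1) => if k = 0 then S₁ else if k % 2 = 1 then S₄ * W k else S₁ * W k

def u (n : ℤ) : Fin 4 → ℤ := ![-(2 * n ^ 2 - 1), n ^ 2, -n, n ^ 2]

lemma S₁_rows (M : Matrix (Fin 4) (Fin 4) ℤ) :
    (S₁ * M) 0 = (fun j => -M 0 j + 2 * M 1 j + 2 * M 2 j + 2 * M 3 j) ∧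
    (S₁ * M) 1 = M 1 ∧ (S₁ * M) 2 = M 2 ∧ (S₁ * M) 3 = M 3 := by
  refine ⟨?_, ?_, ?_, ?_⟩ <;> funext j <;>
    simp [Matrix.mul_apply, Fin.sum_univ_four, S₁] <;> ring

lemma S₄_rows (M : Matrix (Fin 4) (Fin 4) ℤ) :
    (S₄ * M) 0 = M 0 ∧ (S₄ * M) 1 = M 1 ∧ (S₄ * M) 2 = M 2 ∧
    (S₄ * M) 3 = (fun j => 2 * M 0 j + 2 * M 1 j + 2 * M 2 j - M 3 j) := by
  refine ⟨?_, ?_, ?_, ?_⟩ <;> funext j <;>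
    simp [Matrix.mul_apply, Fin.sum_univ_four, S₄] <;> ring

lemma aux (k : ℕ) (hk : 1 ≤ k) :
    (W k * Sθ) 1 = ![-1,1,0,0] ∧ (W k * Sθ) 2 = ![-1,0,0,1] ∧
    (Odd k → (W k * Sθ) 0 = u ((k : ℤ) + 1) ∧ (W k * Sθ) 3 = u k) ∧
    (Even k → (W k * Sθ) 3 = u ((k : ℤ) + 1) ∧ (W k * Sθ) 0 = u k) := by
  induction k, hk using Nat.le_induction with
  | base =>
    have h1 : W 1 = S₁ := by simp [W]
    refine ⟨?_, ?_, fun _ => ⟨?_, ?_⟩, fun h => absurd h (by decide)⟩ <;>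
      funext j <;> fin_cases j <;>
      simp [h1, Matrix.mul_apply, Fin.sum_univ_four, S₁, Sθ, u, Matrix.vecHead, Matrix.vecTail]
  | succ k hk ih =>
    obtain ⟨h1, h2, hodd, heven⟩ := ih
    have hk0 : k ≠ 0 := by omega
    rcases Nat.even_or_odd k with hke | hko
    · -- k even, so W (k+1) = S₁ * W k
      have hW : W (k + 1) = S₁ * W k := by
        have : k % 2 = 0 := Nat.even_iff.mp hke
        simp [W, hk0, this]
      obtain ⟨h3, h0⟩ := heven hke
      have hm : W (k + 1) * Sθ = S₁ * (W k * Sθ) := by rw [hW, mul_assoc]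
      obtain ⟨r0, r1, r2, r3⟩ := S₁_rows (W k * Sθ)
      refine ⟨by rw [hm, r1, h1], by rw [hm, r2, h2], fun _ => ⟨?_, ?_⟩,
        fun h => absurd hke (by simpa [Nat.even_add_one] using h)⟩
      · rw [hm, r0]
        funext j
        fin_cases j <;>
          simp [h0, h1, h2, h3, u, Matrix.cons_val_zero, Matrix.cons_val_one] <;>
          push_cast <;> ring
      · rw [hm, r3, h3]
        funext j
        fin_cases j <;> simp [u] <;> push_cast <;> ring
    · -- k odd, so W (k+1) = S₄ * W k
      have hW : W (k + 1) = S₄ * W k := by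
        have : k % 2 = 1 := Nat.odd_iff.mp hko
        simp [W, hk0, this]
      obtain ⟨h0, h3⟩ := hodd hko
      have hm : W (k + 1) * Sθ = S₄ * (W k * Sθ) := by rw [hW, mul_assoc]
      obtain ⟨r0, r1, r2, r3⟩ := S₄_rows (W k * Sθ)
      refine ⟨by rw [hm, r1, h1], by rw [hm, r2, h2],
        fun h => absurd hko (Nat.odd_add_one.mp h), fun _ => ⟨?_, ?_⟩⟩
      · rw [hm, r3]
        funext j
        fin_cases j <;>
          simp [h0, h1, h2, h3, u] <;> push_cast <;> ring
      · rw [hm, r0, h0]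
        funext j
        fin_cases j <;> simp [u] <;> push_cast <;> ring

/-- The coefficient quadruple of `W_k` is
`(t_k,u_k,v_k,w_k) = (2(k+1)²−1, (k+1)², −(k+1), (k+1)²)`: row `1` of `W_k·S_θ`
for odd `k`, and row `4` for even `k`, equals
`(−(2(k+1)²−1), (k+1)², −(k+1), (k+1)²)`. -/
theorem Wk_coefficient_quadruple (k : ℕ) (hk : 1 ≤ k) :
    (Odd k → (W k * Sθ) 0 =
      ![-(2 * ((k : ℤ) + 1) ^ 2 - 1), ((k : ℤ) + 1) ^ 2, -((k : ℤ) + 1), ((k : ℤ) + 1) ^ 2]) ∧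
    (Even k → (W k * Sθ) 3 =
      ![-(2 * ((k : ℤ) + 1) ^ 2 - 1), ((k : ℤ) + 1) ^ 2, -((k : ℤ) + 1), ((k : ℤ) + 1) ^ 2]) := by
  obtain ⟨_, _, ho, he⟩ := aux k hk
  exact ⟨fun h => (ho h).1, fun h => (he h).1⟩
end
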